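/- Let S be a C-system of ultrafilters, j : V → M = Ult(V,S) the derived ultrapower embedding. Then: (1) the projection function proj_x : O_{x} → V, f ↦ f(x), represents x in the ultrapower, for any x ∈ ⋃C; (2) the function ran_a : f ↦ ran(f) represents a; (3) the function dom_a : f ↦ dom(f) represents j[a]; (4) the identity function id_a on O_a represents (j ↾ a)^{-1}, for any a ∈ C. -/

import Mathlib

noncomputable section

namespace CSF

/-- Code a class of ZF-sets as a `ZFSet` whenever it is extensionally a set
(otherwise return `∅`). -/
def zcode (A : Set ZFSet) : ZFSet := by
  classical exact if h : ∃ z : ZFSet, z.toSet = A then h.choose else ∅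

/-- Iterated union. -/
def itUnion : ℕ → ZFSet → ZFSet
  | 0, a => a
  | n + 1, a => ZFSet.sUnion (itUnion n a)

/-- The transitive closure of a set. -/
def trcl (a : ZFSet) : ZFSet :=
  zcode {x | ∃ n : ℕ, x ∈ itUnion n a}

/-- `M` is extensional if the membership relation restricted to `M` satisfies
extensionality. -/
def Extensional (M : ZFSet) : Prop :=
  ∀ x ∈ M, ∀ y ∈ M, (∀ z ∈ M, z ∈ x ↔ z ∈ y) → x = y

/-- The Mostowski collapse map of `M`, defined by ∈-recursion:
`mos M x = {mos M y : y ∈ x ∩ M}`. -/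
def mos (M : ZFSet) : ZFSet → ZFSet :=
  ZFSet.mem_wf.fix fun x IH =>
    zcode {z | ∃ y, ∃ hy : y ∈ x, y ∈ M ∧ z = IH y hy}

/-- The function `π_M ↾ (a ∩ M)` coded as a set of Kuratowski pairs. -/
def funOf (M a : ZFSet) : ZFSet :=
  zcode {p | ∃ x, x ∈ a ∧ x ∈ M ∧ p = ZFSet.pair x (mos M x)}

/-- `O_a`: the set of restrictions `π_M ↾ (a ∩ M)` of Mostowski collapses of
extensional subsets `M ⊆ trcl(a)`. -/
def O (a : ZFSet) : Set ZFSet :=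
  {f | ∃ M : ZFSet, M ⊆ trcl a ∧ Extensional M ∧ f = funOf M a}

/-- Domain (as a class) of a coded function. -/
def zdom (f : ZFSet) : Set ZFSet := {x | ∃ y, ZFSet.pair x y ∈ f}

/-- Domain (as a set) of a coded function. -/
def zdomZ (f : ZFSet) : ZFSet := zcode (zdom f)

/-- Range (as a set) of a coded function. -/
def zranZ (f : ZFSet) : ZFSet := zcode {y | ∃ x, ZFSet.pair x y ∈ f}

/-- Application of a coded function. -/
def app (f x : ZFSet) : ZFSet :=
  zcode {z | ∃ y, ZFSet.pair x y ∈ f ∧ z ∈ y}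

/-- Restriction `f ↾ a` of a coded function; this is the standard projection
`π_{ba}(f) = f ↾ a` for `f ∈ O_b`, `a ⊆ b`. -/
def restr (f a : ZFSet) : ZFSet :=
  zcode {p | p ∈ f ∧ ∃ x y, x ∈ a ∧ p = ZFSet.pair x y}

/-- A directed set of domains: closed under subsets and (binary) unions, with
transitive union. -/
structure IsDirectedDomains (C : Set ZFSet) : Prop where
  subset_mem : ∀ a ∈ C, ∀ b : ZFSet, b ⊆ a → b ∈ C
  union_mem : ∀ a ∈ C, ∀ b ∈ C, a ∪ b ∈ C
  transitive : ∀ a ∈ C, ∀ x, x ∈ a → ∀ y, y ∈ x → ({y} : ZFSet) ∈ C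

/-- A `C`-system of filters: a family of non-trivial filters `F a` on `P(O_a)` for
`a ∈ C`, satisfying fineness, compatibility and normality. -/
structure IsCSystemOfFilters (C : Set ZFSet) (F : ZFSet → Set (Set ZFSet)) : Prop where
  directed : IsDirectedDomains C
  sets_subset : ∀ a ∈ C, ∀ A ∈ F a, A ⊆ O a
  top_mem : ∀ a ∈ C, O a ∈ F a
  empty_not_mem : ∀ a ∈ C, (∅ : Set ZFSet) ∉ F a
  inter_mem : ∀ a ∈ C, ∀ A ∈ F a, ∀ B ∈ F a, A ∩ B ∈ F a
  superset_mem : ∀ a ∈ C, ∀ A ∈ F a, ∀ B : Set ZFSet, A ⊆ B → B ⊆ O a → B ∈ F a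
  fineness : ∀ a ∈ C, ∀ x, x ∈ a → {f | f ∈ O a ∧ x ∈ zdom f} ∈ F a
  compat : ∀ a ∈ C, ∀ b ∈ C, a ⊆ b → ∀ A : Set ZFSet, A ⊆ O a →
    (A ∈ F a ↔ {f | f ∈ O b ∧ restr f a ∈ A} ∈ F b)
  normality : ∀ a ∈ C, ∀ A : Set ZFSet, A ⊆ O a → (O a \ A) ∉ F a →
    ∀ u : ZFSet → ZFSet, (∀ f ∈ A, ∃ x ∈ zdom f, u f = app f x ∨ u f ∈ app f x) →
    ∃ b ∈ C, a ⊆ b ∧ ∃ B : Set ZFSet, B ⊆ {f | f ∈ O b ∧ restr f a ∈ A} ∧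
      (O b \ B) ∉ F b ∧ ∃ y, y ∈ b ∧ ∀ f ∈ B, u (restr f a) = app f y

/-- A `C`-system of ultrafilters. -/
structure IsCSystemOfUltrafilters (C : Set ZFSet) (F : ZFSet → Set (Set ZFSet))
    extends IsCSystemOfFilters C F : Prop where
  ultra : ∀ a ∈ C, ∀ A : Set ZFSet, A ⊆ O a → (A ∈ F a ∨ (O a \ A) ∈ F a)

/-- Representatives of elements of the ultrapower `Ult(V,S)`: a pair of a domain
`a ∈ C` and a function `u : O_a → V`. -/
abbrev PreU : Type 1 := ZFSet × (ZFSet → ZFSet)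

/-- Equality of ultrapower representatives: `u =_S v`. -/
def eqU (F : ZFSet → Set (Set ZFSet)) (p q : PreU) : Prop :=
  {f | f ∈ O (p.1 ∪ q.1) ∧ p.2 (restr f p.1) = q.2 (restr f q.1)} ∈ F (p.1 ∪ q.1)

/-- Membership of ultrapower representatives: `u ∈_S v`. -/
def memU (F : ZFSet → Set (Set ZFSet)) (p q : PreU) : Prop :=
  {f | f ∈ O (p.1 ∪ q.1) ∧ p.2 (restr f p.1) ∈ q.2 (restr f q.1)} ∈ F (p.1 ∪ q.1)

/-- The constant function `c_x`, representing `j(x)`. -/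
def jrep (x : ZFSet) : PreU := (∅, fun _ => x)

/-- The projection `proj_x : O_{{x}} → V`, `f ↦ f(x)`, representing `x`. -/
def projRep (x : ZFSet) : PreU := ({x}, fun f => app f x)

end CSF

/-!
Every `f ∈ O_b` is a Mostowski collapse `π_M ↾ (b ∩ M)` of an extensional `M`, so it is an
`∈`-isomorphism of its domain onto its range: `f(y) ∈ f(x) ↔ y ∈ x`, and `f` is injective.

Read `F_b` as a filter on `V` concentrated on `O_b`. Compatibility says that `F_a` is the image
of `F_b` under `f ↦ f ↾ a`, so `=_S` and `∈_S` may be evaluated on any common larger domain `b`.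
Normality then turns a choice `f ↦ x_f ∈ a ∩ dom f` made on a large set into a constant: after
enlarging the domain, `f(x_f) = f(y)` for a fixed `y` on a large set, so `x_f = y` by injectivity.
Each of the four representations follows; e.g. `u ∈_S ran_a` means `u(f) = f(x_f)` with
`x_f ∈ a`, and constancy of `x_f` gives `u =_S proj_y` for some `y ∈ a`. For `proj_x` the other
clause of normality, `u(f) ∈ f(x)`, is used directly, and `f(y) ∈ f(x)` gives `y ∈ x`.
-/

universe w

namespace ZFSet

variable {x y z : ZFSet.{w}}

theorem subset_union_left : x ⊆ x ∪ y := fun _ h => mem_union.2 (Or.inl h)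

theorem subset_union_right : y ⊆ x ∪ y := fun _ h => mem_union.2 (Or.inr h)

theorem union_subset (hx : x ⊆ z) (hy : y ⊆ z) : x ∪ y ⊆ z := fun _ h =>
  (mem_union.1 h).elim (fun h => hx h) (fun h => hy h)

theorem singleton_subset_iff : ({x} : ZFSet) ⊆ y ↔ x ∈ y :=
  ⟨fun h => h (mem_singleton.2 rfl), fun h _ hz => mem_singleton.1 hz ▸ h⟩

theorem mem_sUnion_sUnion_of_pair_mem {f : ZFSet.{w}} (h : pair x y ∈ f) :
    x ∈ ⋃₀ ⋃₀ f ∧ y ∈ ⋃₀ ⋃₀ f := by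
  have hxy : ({x, y} : ZFSet) ∈ ⋃₀ f := mem_sUnion_of_mem (mem_pair.2 (Or.inr rfl)) h
  exact ⟨mem_sUnion_of_mem (mem_pair.2 (Or.inl rfl)) hxy,
    mem_sUnion_of_mem (mem_pair.2 (Or.inr rfl)) hxy⟩

end ZFSet

namespace CSF

open ZFSet Filter

section

variable {A : Set ZFSet.{w}} {M a b c f x y z : ZFSet.{w}}

theorem mem_zcode [Small.{w} A] : x ∈ zcode A ↔ x ∈ A := by
  have hA : ∃ z : ZFSet.{w}, z.toSet = A :=
    ⟨range (Subtype.val : A → ZFSet.{w}), (coe_range _).trans Subtype.range_coe⟩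
  rw [zcode, dif_pos hA]
  exact Set.ext_iff.1 hA.choose_spec x

theorem mem_zcode_of_subset (h : ∀ x ∈ A, x ∈ b) : x ∈ zcode A ↔ x ∈ A :=
  haveI : Small.{w} A := @small_subset _ _ _ h (small_coe b)
  mem_zcode

theorem mem_app : z ∈ app f x ↔ ∃ y, pair x y ∈ f ∧ z ∈ y :=
  mem_zcode_of_subset (b := ⋃₀ ⋃₀ ⋃₀ f) fun _ ⟨_, hp, hz⟩ =>
    mem_sUnion_of_mem hz (mem_sUnion_sUnion_of_pair_mem hp).2

theorem mem_zdom_of_mem_app (h : z ∈ app f x) : x ∈ zdom f :=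
  let ⟨y, hy, _⟩ := mem_app.1 h
  ⟨y, hy⟩

theorem mem_zdomZ : x ∈ zdomZ f ↔ x ∈ zdom f :=
  mem_zcode_of_subset (b := ⋃₀ ⋃₀ f) fun _ ⟨_, hp⟩ =>
    (mem_sUnion_sUnion_of_pair_mem hp).1

theorem mem_zranZ : y ∈ zranZ f ↔ ∃ x, pair x y ∈ f :=
  mem_zcode_of_subset (b := ⋃₀ ⋃₀ f) fun _ ⟨_, hp⟩ =>
    (mem_sUnion_sUnion_of_pair_mem hp).2

theorem mem_restr : z ∈ restr f a ↔ z ∈ f ∧ ∃ x y, x ∈ a ∧ z = pair x y :=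
  mem_zcode_of_subset (b := f) fun _ h => h.1

theorem pair_mem_restr : pair x y ∈ restr f a ↔ x ∈ a ∧ pair x y ∈ f := by
  simp only [mem_restr, pair_inj]
  exact ⟨fun ⟨h, _, _, hx, rfl, rfl⟩ => ⟨hx, h⟩,
    fun ⟨hx, h⟩ => ⟨h, x, y, hx, rfl, rfl⟩⟩

theorem restr_restr_of_subset (h : c ⊆ a) : restr (restr f a) c = restr f c := by
  ext p
  simp only [mem_restr]
  constructor
  · rintro ⟨⟨hp, -⟩, hc⟩
    exact ⟨hp, hc⟩
  · rintro ⟨hp, x, y, hx, rfl⟩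
    exact ⟨⟨hp, x, y, h hx, rfl⟩, x, y, hx, rfl⟩

theorem app_restr (hx : x ∈ a) : app (restr f a) x = app f x := by
  ext z
  simp only [mem_app, pair_mem_restr, hx, true_and]

theorem mem_zdom_restr : x ∈ zdom (restr f a) ↔ x ∈ a ∧ x ∈ zdom f := by
  simp only [zdom, Set.mem_ofPred_eq, pair_mem_restr, exists_and_left]

theorem mem_mos : y ∈ mos.{w, w} M x ↔ ∃ z ∈ x, z ∈ M ∧ y = mos M z := by
  rw [mos, WellFounded.fix_eq]
  refine (mem_zcode_of_subset (b := range fun z : x => mos M z) ?_).trans ?_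
  · rintro _ ⟨z, hz, -, rfl⟩
    exact mem_range.2 ⟨⟨z, hz⟩, rfl⟩
  · simp only [Set.mem_ofPred_eq, exists_prop]

theorem mos_injOn (hM : Extensional M) : Set.InjOn (mos.{w, w} M) M := by
  intro x hx
  induction x using inductionOn with
  | _ x ih =>
    intro y hy hxy
    refine hM x hx y hy fun z hz => ⟨fun hzx => ?_, fun hzy => ?_⟩
    · obtain ⟨v, hvy, hv, hzv⟩ := mem_mos.1 (hxy ▸ mem_mos.2 ⟨z, hzx, hz, rfl⟩)
      rwa [ih z hzx hz hv hzv]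
    · obtain ⟨v, hvx, hv, hzv⟩ := mem_mos.1 (hxy ▸ mem_mos.2 ⟨z, hzy, hz, rfl⟩)
      rwa [← ih v hvx hv hz hzv.symm]

theorem mos_mem_mos_iff (hM : Extensional M) (hy : y ∈ M) :
    mos.{w, w} M y ∈ mos M x ↔ y ∈ x := by
  refine ⟨fun h => ?_, fun h => mem_mos.2 ⟨y, h, hy, rfl⟩⟩
  obtain ⟨z, hzx, hz, hyz⟩ := mem_mos.1 h
  rwa [mos_injOn hM hy hz hyz]

theorem mem_trcl : x ∈ trcl a ↔ ∃ n, x ∈ itUnion n a :=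
  mem_zcode_of_subset (b := ⋃₀ range fun n : ℕ => itUnion n a) fun _ ⟨n, hx⟩ =>
    mem_sUnion_of_mem hx (mem_range.2 ⟨n, rfl⟩)

theorem subset_trcl : a ⊆ trcl a := fun _ hx => mem_trcl.2 ⟨0, hx⟩

theorem mem_trcl_of_mem (hx : x ∈ trcl a) (hy : y ∈ x) : y ∈ trcl a :=
  let ⟨n, hn⟩ := mem_trcl.1 hx
  mem_trcl.2 ⟨n + 1, mem_sUnion_of_mem hy hn⟩

theorem Extensional.inter_trcl (hM : Extensional M) : Extensional (M ∩ trcl a) := by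
  intro x hx y hy hxy
  simp only [mem_inter] at hx hy hxy
  exact hM x hx.1 y hy.1 fun z hz =>
    ⟨fun h => (hxy z ⟨hz, mem_trcl_of_mem hx.2 h⟩).1 h,
      fun h => (hxy z ⟨hz, mem_trcl_of_mem hy.2 h⟩).2 h⟩

theorem mos_inter_trcl (hx : x ∈ trcl a) : mos.{w, w} (M ∩ trcl a) x = mos M x := by
  induction x using inductionOn with
  | _ x ih =>
    ext z
    simp only [mem_mos, mem_inter]
    constructor
    · rintro ⟨y, hyx, ⟨hy, -⟩, rfl⟩
      exact ⟨y, hyx, hy, ih y hyx (mem_trcl_of_mem hx hyx)⟩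
    · rintro ⟨y, hyx, hy, rfl⟩
      have hyt := mem_trcl_of_mem hx hyx
      exact ⟨y, hyx, ⟨hy, hyt⟩, (ih y hyx hyt).symm⟩

theorem mem_funOf : y ∈ funOf M a ↔ ∃ x ∈ a, x ∈ M ∧ y = pair x (mos M x) :=
  mem_zcode_of_subset (b := range fun x : a => pair x (mos M x))
    fun _ ⟨x, hx, _, hy⟩ => mem_range.2 ⟨⟨x, hx⟩, hy.symm⟩

theorem pair_mem_funOf : pair x y ∈ funOf M a ↔ x ∈ a ∧ x ∈ M ∧ y = mos M x := by
  simp only [mem_funOf, pair_inj]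
  constructor
  · rintro ⟨_, hx, hM, rfl, rfl⟩
    exact ⟨hx, hM, rfl⟩
  · rintro ⟨hx, hM, rfl⟩
    exact ⟨x, hx, hM, rfl, rfl⟩

theorem mem_zdom_funOf : x ∈ zdom (funOf M a) ↔ x ∈ a ∧ x ∈ M := by
  simp only [zdom, Set.mem_ofPred_eq, pair_mem_funOf, exists_and_left, exists_eq, and_true]

theorem app_funOf (hx : x ∈ zdom (funOf M a)) : app (funOf M a) x = mos M x := by
  ext z
  simp only [mem_app, pair_mem_funOf, mem_zdom_funOf.1 hx, true_and, exists_eq_left]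

theorem restr_funOf (h : a ⊆ b) : restr (funOf M b) a = funOf M a := by
  ext p
  simp only [mem_restr, mem_funOf]
  constructor
  · rintro ⟨⟨x, -, hx, rfl⟩, y, z, hya, hp⟩
    obtain ⟨rfl, rfl⟩ := pair_injective hp
    exact ⟨x, hya, hx, rfl⟩
  · rintro ⟨x, hxa, hx, rfl⟩
    exact ⟨⟨x, h hxa, hx, rfl⟩, x, mos M x, hxa, rfl⟩

theorem funOf_inter_trcl : funOf (M ∩ trcl a) a = funOf M a := by
  ext p
  simp only [mem_funOf, mem_inter]
  constructor
  · rintro ⟨x, hxa, ⟨hx, -⟩, rfl⟩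
    exact ⟨x, hxa, hx, by rw [mos_inter_trcl (subset_trcl hxa)]⟩
  · rintro ⟨x, hxa, hx, rfl⟩
    exact ⟨x, hxa, ⟨hx, subset_trcl hxa⟩, by rw [mos_inter_trcl (subset_trcl hxa)]⟩

theorem mem_O_iff : f ∈ O a ↔ ∃ M, Extensional M ∧ f = funOf M a :=
  ⟨fun ⟨M, _, hM, hf⟩ => ⟨M, hM, hf⟩, fun ⟨M, hM, hf⟩ =>
    ⟨M ∩ trcl a, fun _ h => (mem_inter.1 h).2, hM.inter_trcl, hf.trans funOf_inter_trcl.symm⟩⟩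

theorem restr_mem_O (hf : f ∈ O b) (h : a ⊆ b) : restr f a ∈ O a := by
  obtain ⟨M, hM, rfl⟩ := mem_O_iff.1 hf
  exact mem_O_iff.2 ⟨M, hM, restr_funOf h⟩

theorem pair_mem_iff_of_mem_O (hf : f ∈ O b) : pair x y ∈ f ↔ x ∈ zdom f ∧ y = app f x := by
  obtain ⟨M, -, rfl⟩ := mem_O_iff.1 hf
  constructor
  · intro h
    have hx : x ∈ zdom (funOf M b) := ⟨y, h⟩
    exact ⟨hx, (pair_mem_funOf.1 h).2.2.trans (app_funOf hx).symm⟩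
  · rintro ⟨hx, rfl⟩
    obtain ⟨hxb, hxM⟩ := mem_zdom_funOf.1 hx
    exact pair_mem_funOf.2 ⟨hxb, hxM, app_funOf hx⟩

theorem app_mem_app_iff (hf : f ∈ O b) (hy : y ∈ zdom f) (hx : x ∈ zdom f) :
    app f y ∈ app f x ↔ y ∈ x := by
  obtain ⟨M, hM, rfl⟩ := mem_O_iff.1 hf
  rw [app_funOf hx, app_funOf hy]
  exact mos_mem_mos_iff hM (mem_zdom_funOf.1 hy).2

theorem app_injOn (hf : f ∈ O b) : Set.InjOn (app f) (zdom f) := by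
  obtain ⟨M, hM, rfl⟩ := mem_O_iff.1 hf
  intro x hx y hy hxy
  rw [app_funOf hx, app_funOf hy] at hxy
  exact mos_injOn hM (mem_zdom_funOf.1 hx).2 (mem_zdom_funOf.1 hy).2 hxy

theorem mem_restr_of_mem_O (hf : f ∈ O b) :
    z ∈ restr f a ↔ ∃ x ∈ a, x ∈ zdom f ∧ z = pair x (app f x) := by
  rw [mem_restr]
  constructor
  · rintro ⟨hz, x, y, hx, rfl⟩
    obtain ⟨hxf, rfl⟩ := (pair_mem_iff_of_mem_O hf).1 hz
    exact ⟨x, hx, hxf, rfl⟩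
  · rintro ⟨x, hx, hxf, rfl⟩
    exact ⟨(pair_mem_iff_of_mem_O hf).2 ⟨hxf, rfl⟩, x, _, hx, rfl⟩

theorem mem_zranZ_restr (hf : f ∈ O b) :
    y ∈ zranZ (restr f a) ↔ ∃ x ∈ a, x ∈ zdom f ∧ y = app f x := by
  simp only [mem_zranZ, pair_mem_restr, pair_mem_iff_of_mem_O hf]

end

section

variable {C : Set ZFSet.{w}} {F : ZFSet.{w} → Set (Set ZFSet.{w})} {a b c d e x y : ZFSet.{w}}

theorem IsDirectedDomains.singleton_mem (hC : IsDirectedDomains C) (ha : a ∈ C) (hy : y ∈ a) :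
    {y} ∈ C :=
  hC.subset_mem a ha {y} (singleton_subset_iff.2 hy)

namespace IsCSystemOfFilters

variable (hS : IsCSystemOfFilters C F)

def filter (hb : b ∈ C) : Filter ZFSet.{w} where
  sets := {s | O b ∩ s ∈ F b}
  univ_sets := by
    show O b ∩ Set.univ ∈ F b
    rw [Set.inter_univ]
    exact hS.top_mem b hb
  sets_of_superset hs hst :=
    hS.superset_mem b hb _ hs _ (Set.inter_subset_inter_right _ hst) Set.inter_subset_left
  inter_sets {s t} hs ht := by
    show O b ∩ (s ∩ t) ∈ F b
    rw [Set.inter_inter_distrib_left]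
    exact hS.inter_mem b hb _ hs _ ht

include hS

theorem eventually_mem_O (hb : b ∈ C) : ∀ᶠ f in hS.filter hb, f ∈ O b := by
  show O b ∩ O b ∈ F b
  exact (Set.inter_self (O b)).symm ▸ hS.top_mem b hb

theorem neBot (hb : b ∈ C) : (hS.filter hb).NeBot :=
  ⟨fun h => hS.empty_not_mem b hb (Set.inter_empty (O b) ▸ empty_mem_iff_bot.2 h)⟩

theorem eventually_mem_zdom (hb : b ∈ C) (hx : x ∈ b) :
    ∀ᶠ f in hS.filter hb, x ∈ zdom f :=
  hS.fineness b hb x hx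

theorem exists_mem_O_of_eventually (hb : b ∈ C) {P : ZFSet.{w} → Prop}
    (h : ∀ᶠ f in hS.filter hb, P f) : ∃ f ∈ O b, P f :=
  haveI := hS.neBot hb
  ((hS.eventually_mem_O hb).and h).exists

theorem map_restr_filter (ha : a ∈ C) (hb : b ∈ C) (hab : a ⊆ b) :
    (hS.filter hb).map (restr · a) = hS.filter ha := by
  ext s
  show O b ∩ (restr · a) ⁻¹' s ∈ F b ↔ O a ∩ s ∈ F a
  have hpre : {f | f ∈ O b ∧ restr f a ∈ O a ∩ s} = O b ∩ (restr · a) ⁻¹' s :=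
    Set.ext fun f => ⟨fun h => ⟨h.1, h.2.2⟩, fun h => ⟨h.1, restr_mem_O h.1 hab, h.2⟩⟩
  rw [hS.compat a ha b hb hab _ Set.inter_subset_left, hpre]

theorem eventually_restr_iff (ha : a ∈ C) (hb : b ∈ C) (hab : a ⊆ b)
    {P : ZFSet.{w} → Prop} :
    (∀ᶠ f in hS.filter hb, P (restr f a)) ↔ ∀ᶠ f in hS.filter ha, P f := by
  rw [← hS.map_restr_filter ha hb hab, eventually_map]

theorem eventually_restr_union_iff (hce : c ∪ e ∈ C) (hb : b ∈ C) (h : c ∪ e ⊆ b)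
    (R : ZFSet.{w} → ZFSet.{w} → Prop) :
    (∀ᶠ f in hS.filter hce, R (restr f c) (restr f e)) ↔
      ∀ᶠ f in hS.filter hb, R (restr f c) (restr f e) := by
  rw [← hS.eventually_restr_iff hce hb h]
  simp only [restr_restr_of_subset subset_union_left, restr_restr_of_subset subset_union_right]

end IsCSystemOfFilters

namespace IsCSystemOfUltrafilters

variable (hS : IsCSystemOfUltrafilters C F)
include hS

theorem exists_eventually_eq_app (ha : a ∈ C) {u : ZFSet.{w} → ZFSet.{w}}
    (hu : ∀ᶠ f in hS.filter ha, ∃ x ∈ zdom f, u f = app f x ∨ u f ∈ app f x) :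
    ∃ b, ∃ hb : b ∈ C, a ⊆ b ∧ ∃ y ∈ b, ∀ᶠ f in hS.filter hb, u (restr f a) = app f y := by
  set A := O a ∩ {f | ∃ x ∈ zdom f, u f = app f x ∨ u f ∈ app f x}
  have hA : O a \ A ∉ F a := fun h =>
    hS.empty_not_mem a ha (Set.inter_sdiff_self A (O a) ▸ hS.inter_mem a ha A hu _ h)
  obtain ⟨b, hb, hab, B, hBA, hB, y, hyb, hy⟩ :=
    hS.normality a ha A Set.inter_subset_left hA u fun f hf => hf.2
  have hBO : B ⊆ O b := fun f hf => (hBA hf).1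
  exact ⟨b, hb, hab, y, hyb, hS.superset_mem b hb B ((hS.ultra b hb B hBO).resolve_right hB) _
    (fun f hf => ⟨hBO hf, hy f hf⟩) Set.inter_subset_left⟩

theorem exists_mem_eventually (hd : d ∈ C) {P : ZFSet.{w} → ZFSet.{w} → Prop}
    (h : ∀ᶠ f in hS.filter hd, ∃ x ∈ a, x ∈ zdom f ∧ P f x) :
    ∃ x ∈ a, ∀ᶠ f in hS.filter hd, P f x := by
  choose! sel hsel using fun f (hf : ∃ x ∈ a, x ∈ zdom f ∧ P f x) => hf
  have hsel_d := h.mono hsel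
  obtain ⟨b, hb, hdb, y, hyb, hy⟩ :=
    hS.exists_eventually_eq_app hd (u := fun f => app f (sel f))
      (hsel_d.mono fun f hf => ⟨sel f, hf.2.1, Or.inl rfl⟩)
  have hsel_b := (hS.eventually_restr_iff hd hb hdb).2 hsel_d
  have hsel_eq : ∀ᶠ f in hS.filter hb, sel (restr f d) = y := by
    filter_upwards [hsel_b, hy, hS.eventually_mem_O hb, hS.eventually_mem_zdom hb hyb]
      with f hsel hfy hf hyf
    obtain ⟨hsd, hsf⟩ := mem_zdom_restr.1 hsel.2.1
    rw [app_restr hsd] at hfy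
    exact app_injOn hf hsf hyf hfy
  obtain ⟨f, -, hfa, hfy⟩ := hS.exists_mem_O_of_eventually hb (hsel_b.and hsel_eq)
  refine ⟨y, hfy ▸ hfa.1, (hS.eventually_restr_iff hd hb hdb).1 ?_⟩
  filter_upwards [hsel_b, hsel_eq] with f hf hfy
  exact hfy ▸ hf.2.2

end IsCSystemOfUltrafilters

end

section

variable {C : Set ZFSet.{0}} {F : ZFSet.{0} → Set (Set ZFSet.{0})} {a b c e x : ZFSet.{0}}
  {u : ZFSet.{0} → ZFSet.{0}}

namespace IsCSystemOfFilters

variable (hS : IsCSystemOfFilters C F)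
include hS

theorem eqU_iff_eventually (hc : c ∈ C) (he : e ∈ C) (hb : b ∈ C) (hcb : c ⊆ b)
    (heb : e ⊆ b) {v : ZFSet.{0} → ZFSet.{0}} :
    eqU F (c, u) (e, v) ↔ ∀ᶠ f in hS.filter hb, u (restr f c) = v (restr f e) :=
  hS.eventually_restr_union_iff (hS.directed.union_mem c hc e he) hb (union_subset hcb heb)
    fun g h => u g = v h

theorem memU_iff_eventually (hc : c ∈ C) (he : e ∈ C) (hb : b ∈ C) (hcb : c ⊆ b)
    (heb : e ⊆ b) {v : ZFSet.{0} → ZFSet.{0}} :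
    memU F (c, u) (e, v) ↔ ∀ᶠ f in hS.filter hb, u (restr f c) ∈ v (restr f e) :=
  hS.eventually_restr_union_iff (hS.directed.union_mem c hc e he) hb (union_subset hcb heb)
    fun g h => u g ∈ v h

theorem eqU_singleton_iff (hc : c ∈ C) (hx : {x} ∈ C) (hb : b ∈ C) (hcb : c ⊆ b)
    (hxb : x ∈ b) {φ : ZFSet.{0} → ZFSet.{0}} :
    eqU F (c, u) ({x}, fun f => φ (app f x)) ↔
      ∀ᶠ f in hS.filter hb, u (restr f c) = φ (app f x) := by
  rw [hS.eqU_iff_eventually hc hx hb hcb (singleton_subset_iff.2 hxb)]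
  simp only [app_restr (mem_singleton.2 rfl)]

theorem eqU_projRep_iff (hc : c ∈ C) (hx : {x} ∈ C) (hb : b ∈ C) (hcb : c ⊆ b)
    (hxb : x ∈ b) :
    eqU F (c, u) (projRep x) ↔ ∀ᶠ f in hS.filter hb, u (restr f c) = app f x :=
  hS.eqU_singleton_iff hc hx hb hcb hxb (φ := fun z => z)

theorem memU_projRep_iff_eventually (hc : c ∈ C) (hx : {x} ∈ C) (hb : b ∈ C) (hcb : c ⊆ b)
    (hxb : x ∈ b) :
    memU F (c, u) (projRep x) ↔ ∀ᶠ f in hS.filter hb, u (restr f c) ∈ app f x := by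
  rw [projRep, hS.memU_iff_eventually hc hx hb hcb (singleton_subset_iff.2 hxb)]
  simp only [app_restr (mem_singleton.2 rfl)]

theorem eqU_jrep_iff (hc : c ∈ C) (hb : b ∈ C) (hcb : c ⊆ b) :
    eqU F (c, u) (jrep x) ↔ ∀ᶠ f in hS.filter hb, u (restr f c) = x :=
  hS.eqU_iff_eventually hc (hS.directed.subset_mem c hc ∅ (empty_subset c)) hb hcb
    (empty_subset b)

end IsCSystemOfFilters

namespace IsCSystemOfUltrafilters

variable (hS : IsCSystemOfUltrafilters C F)
include hS

theorem memU_projRep_iff (hx : {x} ∈ C) (hc : c ∈ C) :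
    memU F (c, u) (projRep x) ↔ ∃ y ∈ x, eqU F (c, u) (projRep y) := by
  have hd := hS.directed.union_mem c hc _ hx
  have hxd : x ∈ c ∪ {x} := subset_union_right (mem_singleton.2 rfl)
  constructor
  · intro h
    have h_d := (hS.memU_projRep_iff_eventually hc hx hd subset_union_left hxd).1 h
    obtain ⟨b, hb, hdb, y, hyb, hy⟩ :=
      hS.exists_eventually_eq_app hd (u := fun f => u (restr f c))
        (h_d.mono fun f hf => ⟨x, mem_zdom_of_mem_app hf, Or.inr hf⟩)
    have hcb : c ⊆ b := subset_union_left.trans hdb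
    simp only [restr_restr_of_subset (subset_union_left : c ⊆ c ∪ {x})] at hy
    have hxb : x ∈ b := hdb hxd
    have h_b := (hS.memU_projRep_iff_eventually hc hx hb hcb hxb).1 h
    obtain ⟨f, hf, hfy, hfx, hyf, hxf⟩ := hS.exists_mem_O_of_eventually hb <|
      hy.and <| h_b.and <| (hS.eventually_mem_zdom hb hyb).and (hS.eventually_mem_zdom hb hxb)
    have hyx : y ∈ x := (app_mem_app_iff hf hyf hxf).1 (hfy ▸ hfx)
    have hyC := hS.directed.transitive {x} hx x (mem_singleton.2 rfl) y hyx
    exact ⟨y, hyx, (hS.eqU_projRep_iff hc hyC hb hcb hyb).2 hy⟩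
  · rintro ⟨y, hyx, h⟩
    have hyC := hS.directed.transitive {x} hx x (mem_singleton.2 rfl) y hyx
    have hb := hS.directed.union_mem _ hd _ hyC
    have hyb : y ∈ c ∪ {x} ∪ {y} := subset_union_right (mem_singleton.2 rfl)
    have hxb : x ∈ c ∪ {x} ∪ {y} := subset_union_left hxd
    have hcb : c ⊆ c ∪ {x} ∪ {y} := subset_union_left.trans subset_union_left
    refine (hS.memU_projRep_iff_eventually hc hx hb hcb hxb).2 ?_
    filter_upwards [(hS.eqU_projRep_iff hc hyC hb hcb hyb).1 h, hS.eventually_mem_O hb,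
      hS.eventually_mem_zdom hb hyb, hS.eventually_mem_zdom hb hxb] with f hfy hf hyf hxf
    exact hfy ▸ (app_mem_app_iff hf hyf hxf).2 hyx

theorem memU_ran_iff (ha : a ∈ C) (hc : c ∈ C) :
    memU F (c, u) (a, zranZ) ↔ ∃ y ∈ a, eqU F (c, u) (projRep y) := by
  have hd := hS.directed.union_mem c hc a ha
  rw [hS.memU_iff_eventually hc ha hd subset_union_left subset_union_right]
  constructor
  · intro h
    obtain ⟨y, hya, hy⟩ := hS.exists_mem_eventually hd <| by
      filter_upwards [h, hS.eventually_mem_O hd] with f hfy hf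
      exact (mem_zranZ_restr hf).1 hfy
    have hyC := hS.directed.singleton_mem ha hya
    exact ⟨y, hya, (hS.eqU_projRep_iff hc hyC hd subset_union_left (subset_union_right hya)).2 hy⟩
  · rintro ⟨y, hya, h⟩
    have hyC := hS.directed.singleton_mem ha hya
    have hyd : y ∈ c ∪ a := subset_union_right hya
    filter_upwards [(hS.eqU_projRep_iff hc hyC hd subset_union_left hyd).1 h,
      hS.eventually_mem_O hd, hS.eventually_mem_zdom hd hyd] with f hfy hf hyf
    exact (mem_zranZ_restr hf).2 ⟨y, hya, hyf, hfy⟩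

theorem memU_dom_iff (ha : a ∈ C) (hc : c ∈ C) :
    memU F (c, u) (a, zdomZ) ↔ ∃ x ∈ a, eqU F (c, u) (jrep x) := by
  have hd := hS.directed.union_mem c hc a ha
  rw [hS.memU_iff_eventually hc ha hd subset_union_left subset_union_right]
  constructor
  · intro h
    obtain ⟨x, hxa, hx⟩ := hS.exists_mem_eventually hd (P := fun f x => u (restr f c) = x) <|
      h.mono fun f hf =>
        let ⟨hua, huf⟩ := (mem_zdomZ.trans mem_zdom_restr).1 hf
        ⟨_, hua, huf, rfl⟩
    exact ⟨x, hxa, (hS.eqU_jrep_iff hc hd subset_union_left).2 hx⟩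
  · rintro ⟨x, hxa, h⟩
    filter_upwards [(hS.eqU_jrep_iff hc hd subset_union_left).1 h,
      hS.eventually_mem_zdom hd (subset_union_right hxa)] with f hfx hxf
    exact (mem_zdomZ.trans mem_zdom_restr).2 (hfx ▸ ⟨hxa, hxf⟩)

theorem memU_id_iff (ha : a ∈ C) (hc : c ∈ C) :
    memU F (c, u) (a, fun f => f) ↔
      ∃ x ∈ a, eqU F (c, u) ({x}, fun f => pair x (app f x)) := by
  have hd := hS.directed.union_mem c hc a ha
  rw [hS.memU_iff_eventually hc ha hd subset_union_left subset_union_right]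
  constructor
  · intro h
    obtain ⟨x, hxa, hx⟩ := hS.exists_mem_eventually hd <| by
      filter_upwards [h, hS.eventually_mem_O hd] with f hfx hf
      exact (mem_restr_of_mem_O hf).1 hfx
    have hxC := hS.directed.singleton_mem ha hxa
    exact ⟨x, hxa,
      (hS.eqU_singleton_iff hc hxC hd subset_union_left (subset_union_right hxa)).2 hx⟩
  · rintro ⟨x, hxa, h⟩
    have hxC := hS.directed.singleton_mem ha hxa
    have hxd : x ∈ c ∪ a := subset_union_right hxa
    filter_upwards [(hS.eqU_singleton_iff hc hxC hd subset_union_left hxd).1 h,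
      hS.eventually_mem_O hd, hS.eventually_mem_zdom hd hxd] with f hfx hf hxf
    exact (mem_restr_of_mem_O hf).2 ⟨x, hxa, hxf, hfx⟩

end IsCSystemOfUltrafilters

end

end CSF

open CSF

-- `[r]_S = X` is stated extensionally: the `∈_S`-predecessors of `r` are the classes of the
-- canonical representatives of the elements of `X`.
theorem stmt_9_general (C : Set ZFSet) (F : ZFSet → Set (Set ZFSet))
    (hS : IsCSystemOfUltrafilters C F) :
    -- (1) `[proj_x]_S = x` for `x ∈ ⋃C`
    (∀ x : ZFSet, ({x} : ZFSet) ∈ C → ∀ p : PreU, p.1 ∈ C →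
      (memU F p (projRep x) ↔ ∃ y, y ∈ x ∧ eqU F p (projRep y))) ∧
    -- (2) `[ran_a]_S = a` for `a ∈ C`
    (∀ a ∈ C, ∀ p : PreU, p.1 ∈ C →
      (memU F p (a, fun f => zranZ f) ↔ ∃ y, y ∈ a ∧ eqU F p (projRep y))) ∧
    -- (3) `[dom_a]_S = j[a]` for `a ∈ C`
    (∀ a ∈ C, ∀ p : PreU, p.1 ∈ C →
      (memU F p (a, fun f => zdomZ f) ↔ ∃ x, x ∈ a ∧ eqU F p (jrep x))) ∧
    -- (4) `[id_a]_S = (j ↾ a)⁻¹` for `a ∈ C`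
    (∀ a ∈ C, ∀ p : PreU, p.1 ∈ C →
      (memU F p (a, fun f => f) ↔
        ∃ x, x ∈ a ∧ eqU F p ({x}, fun f => ZFSet.pair x (app f x)))) :=
  ⟨fun _ hx _ hc => hS.memU_projRep_iff hx hc, fun _ ha _ hc => hS.memU_ran_iff ha hc,
    fun _ ha _ hc => hS.memU_dom_iff ha hc, fun _ ha _ hc => hS.memU_id_iff ha hc⟩

/-- Canonical representatives in the ultrapower `Ult(V,S)` of a `C`-system of
ultrafilters, characterized extensionally (via the identification of the well-founded
part with its collapse): (1) `proj_x : f ↦ f(x)` represents `x`; (2) `ran_a : f ↦ ran(f)`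
represents `a`; (3) `dom_a : f ↦ dom(f)` represents `j[a]`; (4) `id_a` represents
`(j ↾ a)⁻¹`, whose elements are the pairs `⟨j(x), x⟩` for `x ∈ a`. -/
theorem stmt_9 (C : Set ZFSet) (F : ZFSet → Set (Set ZFSet))
    (hS : IsCSystemOfUltrafilters C F) (h0 : (∅ : ZFSet) ∈ C) :
    -- (1) `[proj_x]_S = x` for `x ∈ ⋃C`
    (∀ x : ZFSet, ({x} : ZFSet) ∈ C → ∀ p : PreU, p.1 ∈ C →
      (memU F p (projRep x) ↔ ∃ y, y ∈ x ∧ eqU F p (projRep y))) ∧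
    -- (2) `[ran_a]_S = a` for `a ∈ C`
    (∀ a ∈ C, ∀ p : PreU, p.1 ∈ C →
      (memU F p (a, fun f => zranZ f) ↔ ∃ y, y ∈ a ∧ eqU F p (projRep y))) ∧
    -- (3) `[dom_a]_S = j[a]` for `a ∈ C`
    (∀ a ∈ C, ∀ p : PreU, p.1 ∈ C →
      (memU F p (a, fun f => zdomZ f) ↔ ∃ x, x ∈ a ∧ eqU F p (jrep x))) ∧
    -- (4) `[id_a]_S = (j ↾ a)⁻¹` for `a ∈ C`
    (∀ a ∈ C, ∀ p : PreU, p.1 ∈ C →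
      (memU F p (a, fun f => f) ↔
        ∃ x, x ∈ a ∧ eqU F p ({x}, fun f => ZFSet.pair x (app f x)))) :=
  stmt_9_general C F hS
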